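/- arXiv:2509.04880 — 5 statements merged into one kernel-verified Lean document; each statement's English description precedes it below -/
import Mathlib

section
/- Let N be a positive integer and let x : ℤ/Nℤ → {-1,1} with Σ(x) := ∑_{i ∈ ℤ/Nℤ} x_i = 0. Let x̃ : ℤ → {-1,1} be the lift of x (x̃_i = x_{i mod N}). Then the supremum of all interval sums Σ_a^b(x̃) = ∑_{a ≤ i ≤ b} x̃_i over a ≤ b equals the negative of the infimum of all such interval sums; i.e. Σ_max(x̃) = -Σ_min(x̃). -/
/-- The set of all interval sums of the lift of `x : ZMod N → ℤ` to `ℤ`,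
together with `0` (the empty interval sum). -/
def intervalSums (N : ℕ) (x : ZMod N → ℤ) : Set ℤ :=
  {0} ∪ {s : ℤ | ∃ a b : ℤ, a ≤ b ∧ s = ∑ i ∈ Finset.Icc a b, x (i : ZMod N)}

/-! A full period of the lift sums to `∑ i, x i = 0`. Hence the sum over `[a, b)` is minus the sum
over the complementary arc `[b, c)`, where `c ≥ b` is congruent to `a` modulo `N`: the set `S` of
interval sums is symmetric, and `sup S = sup (-S) = -inf S`. It is bounded because every interval
sum is also the sum over an interval shorter than one period. -/

open Finset

section PeriodicLift

variable {M : Type*} [AddCommMonoid M] {N : ℕ} [NeZero N]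

theorem sum_Ico_add_sum_Ico {α : Type*} [LinearOrder α] [LocallyFiniteOrder α] (f : α → M)
    {a b c : α} (hab : a ≤ b) (hbc : b ≤ c) :
    ∑ i ∈ Ico a b, f i + ∑ i ∈ Ico b c, f i = ∑ i ∈ Ico a c, f i := by
  rw [← sum_union (Ico_disjoint_Ico_consecutive a b c), Ico_union_Ico_eq_Ico hab hbc]

theorem sum_Ico_intCast_eq_sum_univ (f : ZMod N → M) (a : ℤ) :
    ∑ i ∈ Ico a (a + N), f i = ∑ i, f i := by
  refine sum_nbij' (fun i => (i : ZMod N)) (fun z => a + ((z - a).val : ℤ))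
    (fun _ _ => mem_univ _) (fun z _ => ?_) (fun i hi => ?_) (fun z _ => ?_) (fun _ _ => rfl)
  · have := ZMod.val_lt (z - (a : ZMod N))
    simp only [mem_Ico]
    omega
  · simp only [mem_Ico] at hi
    rw [← Int.cast_sub, ZMod.val_intCast, Int.emod_eq_of_lt (by omega) (by omega)]
    ring
  · simp [ZMod.natCast_val, ZMod.cast_id]

theorem sum_Ico_add_mul_eq_nsmul (f : ZMod N → M) (a : ℤ) (k : ℕ) :
    ∑ i ∈ Ico a (a + k * N), f i = k • ∑ i, f i := by
  induction k with
  | zero => simp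
  | succ k ih =>
    have hN : (0 : ℤ) ≤ N := Int.natCast_nonneg N
    rw [← sum_Ico_add_sum_Ico _ (b := a + k * N) (by nlinarith) (by push_cast; nlinarith), ih,
      show a + ((k + 1 : ℕ) : ℤ) * N = a + k * N + N by push_cast; ring,
      sum_Ico_intCast_eq_sum_univ, succ_nsmul]

end PeriodicLift

theorem intervalSums_eq_Ico {N : ℕ} (x : ZMod N → ℤ) :
    intervalSums N x = {s | ∃ a b : ℤ, a ≤ b ∧ s = ∑ i ∈ Ico a b, x i} := by
  ext s
  constructor
  · rintro (hs | ⟨a, b, hab, rfl⟩)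
    · exact ⟨0, 0, le_rfl, by simpa using hs⟩
    · exact ⟨a, b + 1, by omega, by rw [Ico_add_one_right_eq_Icc]⟩
  · rintro ⟨a, b, hab, rfl⟩
    rcases hab.eq_or_lt with rfl | hab
    · simp [intervalSums]
    · refine Or.inr ⟨a, b - 1, by omega, ?_⟩
      rw [← Ico_add_one_right_eq_Icc, sub_add_cancel]

section ZeroSum

variable {N : ℕ} [NeZero N] {x : ZMod N → ℤ}

theorem sum_Ico_eq_zero_of_dvd (hsum : ∑ i, x i = 0) {a c : ℤ} (hac : a ≤ c)
    (hN : (N : ℤ) ∣ c - a) : ∑ i ∈ Ico a c, x i = 0 := by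
  obtain ⟨k, hk⟩ := hN
  have hk0 : 0 ≤ k := by
    by_contra! h
    nlinarith [NeZero.pos N]
  lift k to ℕ using hk0
  rw [show c = a + k * N by linarith, sum_Ico_add_mul_eq_nsmul, hsum, smul_zero]

theorem neg_mem_intervalSums (hsum : ∑ i, x i = 0) {s : ℤ} (hs : s ∈ intervalSums N x) :
    -s ∈ intervalSums N x := by
  rw [intervalSums_eq_Ico] at hs ⊢
  obtain ⟨a, b, hab, rfl⟩ := hs
  set c := a + (b - a) * N with hc
  have hbc : b ≤ c := by nlinarith [NeZero.one_le (n := N)]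
  have hperiods :=
    sum_Ico_eq_zero_of_dvd hsum (hab.trans hbc) (Dvd.intro (b - a) (by rw [hc]; ring))
  rw [← sum_Ico_add_sum_Ico _ hab hbc] at hperiods
  exact ⟨b, c, hbc, by linarith⟩

theorem neg_intervalSums (hsum : ∑ i, x i = 0) : -intervalSums N x = intervalSums N x := by
  ext s
  exact ⟨fun hs => neg_neg s ▸ neg_mem_intervalSums hsum hs, neg_mem_intervalSums hsum⟩

theorem abs_le_of_mem_intervalSums (hsum : ∑ i, x i = 0) {s : ℤ} (hs : s ∈ intervalSums N x) :
    |s| ≤ ∑ i, |x i| := by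
  rw [intervalSums_eq_Ico] at hs
  obtain ⟨a, b, hab, rfl⟩ := hs
  have hN : (0 : ℤ) < N := by exact_mod_cast NeZero.pos N
  set a' := a + N * ((b - a) / N) with ha'
  have hdiv := Int.emod_add_mul_ediv (b - a) N
  have hrem_nonneg := Int.emod_nonneg (b - a) hN.ne'
  have hrem_lt := Int.emod_lt_of_pos (b - a) hN
  have haa' : a ≤ a' :=
    le_add_of_nonneg_right (mul_nonneg hN.le (Int.ediv_nonneg (sub_nonneg.2 hab) hN.le))
  have ha'b : a' ≤ b := by linarith
  have hshort : ∑ i ∈ Ico a b, x i = ∑ i ∈ Ico a' b, x i := by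
    rw [← sum_Ico_add_sum_Ico _ haa' ha'b,
      sum_Ico_eq_zero_of_dvd hsum haa' (Dvd.intro ((b - a) / N) (by rw [ha']; ring)), zero_add]
  calc |∑ i ∈ Ico a b, x i| = |∑ i ∈ Ico a' b, x i| := by rw [hshort]
    _ ≤ ∑ i ∈ Ico a' b, |x i| := abs_sum_le_sum_abs _ _
    _ ≤ ∑ i ∈ Ico a' (a' + N), |x i| :=
        sum_le_sum_of_subset_of_nonneg (Ico_subset_Ico_right (by linarith))
          (fun _ _ _ => abs_nonneg _)
    _ = ∑ i, |x i| := sum_Ico_intCast_eq_sum_univ (fun i => |x i|) a'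

end ZeroSum

theorem stmt_0_general (N : ℕ) [NeZero N] (x : ZMod N → ℤ)
    (hsum : ∑ i, x i = 0) :
    sSup (intervalSums N x) = - sInf (intervalSums N x) := by
  have hne : (intervalSums N x).Nonempty := ⟨0, Or.inl rfl⟩
  have hbdd : BddBelow (intervalSums N x) :=
    ⟨-∑ i, |x i|, fun _ hs => neg_le_of_abs_le (abs_le_of_mem_intervalSums hsum hs)⟩
  rw [← csSup_neg hne hbdd, neg_intervalSums hsum]

theorem stmt_0 (N : ℕ) [NeZero N] (x : ZMod N → ℤ)
    (hx : ∀ i, x i = 1 ∨ x i = -1)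
    (hsum : ∑ i, x i = 0) :
    sSup (intervalSums N x) = - sInf (intervalSums N x) :=
  stmt_0_general N x hsum
end

section
/- Let M be a positive integer, y : ℤ/Mℤ → {-1,1} with Σ(y) := ∑_{i} y_i ≥ 0, and let ỹ be the lift of y to ℤ. Let r ≥ 0 be an integer. Then any interval [a,b] ⊆ ℤ with ∑_{i=a}^b ỹ_i < -r that is minimal (no proper subinterval also has sum < -r) has length b - a + 1 < M. -/
/-
Proof idea: if the minimal interval [a, b] had length at least M, split it into its first M
terms, which sum to Σ(y) ≥ 0 by periodicity, and the remaining tail [a + M, b]. The tail is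
either empty (sum 0 ≥ -r) or a proper subinterval (sum ≥ -r by minimality), so the whole sum
would be ≥ -r.
-/

open Finset

theorem ZMod.sum_Ico_intCast {β : Type*} [AddCommMonoid β] (M : ℕ) [NeZero M]
    (f : ZMod M → β) (c : ℤ) : ∑ i ∈ Ico c (c + M), f i = ∑ j, f j := by
  have hinj : Set.InjOn (Int.cast : ℤ → ZMod M) (Ico c (c + M)) := by
    intro i hi j hj hij
    rw [coe_Ico, Set.mem_Ico] at hi hj
    have hdvd := (ZMod.intCast_eq_intCast_iff_dvd_sub i j M).1 hij
    have := Int.eq_zero_of_abs_lt_dvd hdvd (by rw [abs_lt]; omega)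
    omega
  have himage : (Ico c (c + M)).image (Int.cast : ℤ → ZMod M) = univ :=
    eq_univ_of_card _ (by simp [card_image_of_injOn hinj])
  rw [← sum_image hinj, himage]

theorem Int.sum_Icc_eq_sum_Ico_add_sum_Icc {β : Type*} [AddCommMonoid β] (f : ℤ → β)
    {a m b : ℤ} (ham : a ≤ m) (hmb : m ≤ b + 1) :
    ∑ i ∈ Icc a b, f i = ∑ i ∈ Ico a m, f i + ∑ i ∈ Icc m b, f i := by
  rw [← Ico_add_one_right_eq_Icc, ← Ico_add_one_right_eq_Icc,
    ← sum_union (Ico_disjoint_Ico_consecutive a m (b + 1)), Ico_union_Ico_eq_Ico ham hmb]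

theorem stmt_7_general (M : ℕ) [NeZero M] (y : ZMod M → ℤ)
    (hsum : 0 ≤ ∑ i, y i)
    (r : ℤ) (hr : 0 ≤ r)
    (a b : ℤ)
    (hover : (∑ i ∈ Finset.Icc a b, y (i : ZMod M)) < -r)
    (hmin : ∀ a' b' : ℤ, a ≤ a' → b' ≤ b → a' ≤ b' → (a', b') ≠ (a, b) →
      -r ≤ ∑ i ∈ Finset.Icc a' b', y (i : ZMod M)) :
    b - a + 1 < (M : ℤ) := by
  by_contra! hlong
  have hM : (0 : ℤ) < M := by exact_mod_cast Nat.pos_of_neZero M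
  have htail : -r ≤ ∑ i ∈ Icc (a + M) b, y (i : ZMod M) := by
    rcases (show a + M ≤ b ∨ a + M = b + 1 by omega) with hne | hempty
    · exact hmin _ _ (by omega) le_rfl hne (by simp; omega)
    · simpa [Icc_eq_empty_of_lt (show b < a + M by omega)] using hr
  rw [Int.sum_Icc_eq_sum_Ico_add_sum_Icc _ (show a ≤ a + M by omega) (by omega),
    ZMod.sum_Ico_intCast] at hover
  linarith

theorem stmt_7 (M : ℕ) [NeZero M] (y : ZMod M → ℤ)
    (hy : ∀ i, y i = 1 ∨ y i = -1)
    (hsum : 0 ≤ ∑ i, y i)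
    (r : ℤ) (hr : 0 ≤ r)
    (a b : ℤ) (hab : a ≤ b)
    (hover : (∑ i ∈ Finset.Icc a b, y (i : ZMod M)) < -r)
    (hmin : ∀ a' b' : ℤ, a ≤ a' → b' ≤ b → a' ≤ b' → (a', b') ≠ (a, b) →
      -r ≤ ∑ i ∈ Finset.Icc a' b', y (i : ZMod M)) :
    b - a + 1 < (M : ℤ) :=
  stmt_7_general M y hsum r hr a b hover hmin
end

section
/- In the oriented planar hitomezashi pattern Cloth_{ℤ×ℤ}(x,y), every edge of a hitomezashi path (a path alternating between horizontal and vertical oriented edges, traversed in the direction of orientation) has the same height, where the height of an edge is the average of the heights of the two square regions it borders. Equivalently, along any directed edge of a hitomezashi path, the region to the left of the direction of travel has height exactly one more than the region to the right. -/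
/-!
Write `X j = Σ_0^j(x)` and `Y i = Σ_0^i(y)`, so that the region `[i, i+1] × [j, j+1]` has height
`X j - Y i`. Around a lattice point `p = (i, j)` half the sum `V p` of the four region heights is
`X j + X (j-1) - Y i - Y (i-1)`, and twice the height of each of the four edges at `p` is `V p`
shifted by `± x j` or `± y i`. Reading off which edge a legal step uses, a horizontal step into `p`
and a vertical step out of `p` both have doubled height `V p + x j * y i`, while a vertical step
into `p` and a horizontal step out of `p` both have `V p - x j * y i`. So the height cannot change
where a hitomezashi path turns.
-/

/-- The signed interval sum `Σ_a^b(z)`. -/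
noncomputable def ssum (z : ℤ → ℤ) (a b : ℤ) : ℤ :=
  (∑ i ∈ Finset.Icc a b, z i) - ∑ i ∈ Finset.Icc (b + 1) (a - 1), z i

/-- The height of the square region `[i, i+1] × [j, j+1]`. -/
noncomputable def regionHeight (x y : ℤ → ℤ) (i j : ℤ) : ℤ :=
  ssum x 0 j - ssum y 0 i

/-- A legal directed horizontal step of the oriented planar hitomezashi pattern. -/
def HStep (x : ℤ → ℤ) (u w : ℤ × ℤ) : Prop :=
  w.2 = u.2 ∧ ((x u.2 = 1 ∧ w.1 = u.1 + 1) ∨ (x u.2 = -1 ∧ w.1 = u.1 - 1))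

/-- A legal directed vertical step of the oriented planar hitomezashi pattern. -/
def VStep (y : ℤ → ℤ) (u w : ℤ × ℤ) : Prop :=
  w.1 = u.1 ∧ ((y u.1 = 1 ∧ w.2 = u.2 + 1) ∨ (y u.1 = -1 ∧ w.2 = u.2 - 1))

/-- Twice the height of the edge traversed by the step `u → w`:
the sum of the heights of the two square regions bordering the edge. -/
noncomputable def edgeHeight2 (x y : ℤ → ℤ) (u w : ℤ × ℤ) : ℤ :=
  if w.2 = u.2 then
    regionHeight x y (min u.1 w.1) u.2 + regionHeight x y (min u.1 w.1) (u.2 - 1)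
  else
    regionHeight x y (u.1 - 1) (min u.2 w.2) + regionHeight x y u.1 (min u.2 w.2)

lemma ssum_zero_eq_sub_one_add (z : ℤ → ℤ) (b : ℤ) :
    ssum z 0 b = ssum z 0 (b - 1) + z b := by
  unfold ssum
  rw [zero_sub, sub_add_cancel]
  rcases le_or_gt 0 b with hb | hb
  · rw [← Finset.insert_Icc_sub_one_right_eq_Icc hb, Finset.sum_insert (by simp),
      Finset.Icc_eq_empty_of_lt (a := b + 1) (by omega),
      Finset.Icc_eq_empty_of_lt (a := b) (by omega)]
    ring
  · rw [← Finset.insert_Icc_add_one_left_eq_Icc (by omega : b ≤ -1), Finset.sum_insert (by simp),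
      Finset.Icc_eq_empty_of_lt (b := b) (by omega),
      Finset.Icc_eq_empty_of_lt (b := b - 1) (by omega)]
    ring

/-- Twice the average height of the four regions around the lattice point `p`. -/
noncomputable def vertexHeight2 (x y : ℤ → ℤ) (p : ℤ × ℤ) : ℤ :=
  ssum x 0 p.2 + ssum x 0 (p.2 - 1) - ssum y 0 p.1 - ssum y 0 (p.1 - 1)

section
variable {x y : ℤ → ℤ} {u w : ℤ × ℤ}

lemma hStep_iff : HStep x u w ↔
    (x u.2 = 1 ∧ w = (u.1 + 1, u.2)) ∨ (x u.2 = -1 ∧ w = (u.1 - 1, u.2)) := by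
  obtain ⟨w1, w2⟩ := w
  simp only [HStep, Prod.mk.injEq]
  tauto

lemma vStep_iff : VStep y u w ↔
    (y u.1 = 1 ∧ w = (u.1, u.2 + 1)) ∨ (y u.1 = -1 ∧ w = (u.1, u.2 - 1)) := by
  obtain ⟨w1, w2⟩ := w
  simp only [VStep, Prod.mk.injEq]
  tauto

lemma HStep.not_vStep (h : HStep x u w) : ¬VStep y u w := by
  have := h.1
  rintro ⟨-, ⟨-, hw⟩ | ⟨-, hw⟩⟩ <;> omega

theorem HStep.edgeHeight2_eq_target (h : HStep x u w) :
    edgeHeight2 x y u w = vertexHeight2 x y w + x w.2 * y w.1 := by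
  rcases hStep_iff.1 h with ⟨hx, rfl⟩ | ⟨hx, rfl⟩ <;>
  · simp only [hx, edgeHeight2, ↓reduceIte, regionHeight, vertexHeight2,
      le_add_iff_nonneg_right, tsub_le_iff_right, zero_le_one, inf_of_le_left, inf_of_le_right,
      add_sub_cancel_right, ssum_zero_eq_sub_one_add y (u.1 + 1),
      ssum_zero_eq_sub_one_add y (u.1 - 1)]
    ring

theorem HStep.edgeHeight2_eq_source (h : HStep x u w) :
    edgeHeight2 x y u w = vertexHeight2 x y u - x u.2 * y u.1 := by
  rcases hStep_iff.1 h with ⟨hx, rfl⟩ | ⟨hx, rfl⟩ <;>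
  · simp only [hx, edgeHeight2, ↓reduceIte, regionHeight, vertexHeight2,
      le_add_iff_nonneg_right, tsub_le_iff_right, zero_le_one, inf_of_le_left, inf_of_le_right,
      ssum_zero_eq_sub_one_add y u.1]
    ring

theorem VStep.edgeHeight2_eq_target (h : VStep y u w) :
    edgeHeight2 x y u w = vertexHeight2 x y w - x w.2 * y w.1 := by
  rcases vStep_iff.1 h with ⟨hy, rfl⟩ | ⟨hy, rfl⟩ <;>
  · simp only [hy, edgeHeight2, add_eq_left, sub_eq_self, one_ne_zero, ↓reduceIte, regionHeight,
      vertexHeight2, le_add_iff_nonneg_right, tsub_le_iff_right, zero_le_one, inf_of_le_left,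
      inf_of_le_right, add_sub_cancel_right, ssum_zero_eq_sub_one_add x (u.2 + 1),
      ssum_zero_eq_sub_one_add x (u.2 - 1)]
    ring

theorem VStep.edgeHeight2_eq_source (h : VStep y u w) :
    edgeHeight2 x y u w = vertexHeight2 x y u + x u.2 * y u.1 := by
  rcases vStep_iff.1 h with ⟨hy, rfl⟩ | ⟨hy, rfl⟩ <;>
  · simp only [hy, edgeHeight2, add_eq_left, sub_eq_self, one_ne_zero, ↓reduceIte, regionHeight,
      vertexHeight2, le_add_iff_nonneg_right, tsub_le_iff_right, zero_le_one, inf_of_le_left,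
      inf_of_le_right, ssum_zero_eq_sub_one_add x u.2]
    ring

end

lemma eq_of_forall_succ_eq {α : Type*} {n : ℕ} {f : ℕ → α}
    (h : ∀ k, k + 1 < n → f k = f (k + 1)) :
    ∀ k < n, ∀ l < n, f k = f l := by
  have eq_zero : ∀ k < n, f k = f 0 := by
    intro k
    induction k with
    | zero => intro _; rfl
    | succ k ih => intro hk; rw [← h k hk, ih (by omega)]
  intro k hk l hl
  rw [eq_zero k hk, eq_zero l hl]

theorem stmt_11_general (x y : ℤ → ℤ)
    (n : ℕ) (v : ℕ → ℤ × ℤ)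
    (hstep : ∀ k < n, HStep x (v k) (v (k + 1)) ∨ VStep y (v k) (v (k + 1)))
    (halt : ∀ k, k + 1 < n →
      (HStep x (v k) (v (k + 1)) ↔ VStep y (v (k + 1)) (v (k + 2)))) :
    ∀ k < n, ∀ l < n,
      edgeHeight2 x y (v k) (v (k + 1)) = edgeHeight2 x y (v l) (v (l + 1)) := by
  refine eq_of_forall_succ_eq fun k hk => ?_
  rcases hstep k (by omega) with hH | hV
  · rw [hH.edgeHeight2_eq_target, ((halt k hk).1 hH).edgeHeight2_eq_source]
  · have hH : HStep x (v (k + 1)) (v (k + 2)) :=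
      (hstep (k + 1) hk).resolve_right fun hV' => ((halt k hk).2 hV').not_vStep hV
    rw [hV.edgeHeight2_eq_target, hH.edgeHeight2_eq_source]

theorem stmt_11 (x y : ℤ → ℤ)
    (hx : ∀ j, x j = 1 ∨ x j = -1)
    (hy : ∀ i, y i = 1 ∨ y i = -1)
    (n : ℕ) (v : ℕ → ℤ × ℤ)
    (hstep : ∀ k < n, HStep x (v k) (v (k + 1)) ∨ VStep y (v k) (v (k + 1)))
    (halt : ∀ k, k + 1 < n →
      (HStep x (v k) (v (k + 1)) ↔ VStep y (v (k + 1)) (v (k + 2)))) :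
    ∀ k < n, ∀ l < n,
      edgeHeight2 x y (v k) (v (k + 1)) = edgeHeight2 x y (v l) (v (l + 1)) :=
  stmt_11_general x y n v hstep halt
end

section
/- Consider the cylindrical hitomezashi pattern Cloth_{ℤ×(ℤ/Nℤ)}(x,y) restricted to the region a ≤ first coordinate ≤ b (a < b integers). Among the finitely many maximal directed hitomezashi paths in this restricted pattern whose endpoints lie on the lines {first coordinate = a} or {first coordinate = b}, the number of paths going from the line x = a to the line x = b minus the number going from x = b to x = a equals Σ(x) = ∑_{j ∈ ℤ/Nℤ} x_j. In particular, if Σ(x) ≠ 0, there exists a hitomezashi path with one endpoint on x = a and the other on x = b. -/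
/-
A maximal hitomezashi path in the strip is an orbit segment of the bijection `walk` on states
(vertex, whether the next step is horizontal). Vertical steps never leave the strip, so a maximal
path starts and ends with a vertical step, the horizontal step into its first vertex comes from
outside the strip, and the horizontal step out of its last vertex leads outside. Since `walk` is
a bijection and the strip is finite, every entry state reaches an exit, and distinct entries reach
distinct exits. Each row `j` has exactly one entry vertex (column `a` if `x j = 1`, else `b`) and
exactly one exit vertex (column `b` if `x j = 1`, else `a`), so both the first row and the last
row are bijections from maximal paths onto `ℤ/Nℤ`. A path runs from `a` to `b` iff both rows carry
`+1`, and from `b` to `a` iff both carry `-1`; summing `(x (first row) + x (last row)) / 2` over all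
maximal paths gives the difference of the two counts on one side and `∑ j, x j` on the other.
-/

/-- A legal directed horizontal step on the cylinder `ℤ × (ℤ/Nℤ)`. -/
def CHStep (N : ℕ) (x : ZMod N → ℤ) (u w : ℤ × ZMod N) : Prop :=
  w.2 = u.2 ∧ ((x u.2 = 1 ∧ w.1 = u.1 + 1) ∨ (x u.2 = -1 ∧ w.1 = u.1 - 1))

/-- A legal directed vertical step on the cylinder `ℤ × (ℤ/Nℤ)`. -/
def CVStep (N : ℕ) (y : ℤ → ℤ) (u w : ℤ × ZMod N) : Prop :=
  w.1 = u.1 ∧ ((y u.1 = 1 ∧ w.2 = u.2 + 1) ∨ (y u.1 = -1 ∧ w.2 = u.2 - 1))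

/-- The (undirected) edge used by a step `u → w` on the cylinder. -/
def cedge (N : ℕ) (x : ZMod N → ℤ) (y : ℤ → ℤ) (u w : ℤ × ZMod N) :
    (ℤ × ZMod N) ⊕ (ℤ × ZMod N) :=
  if w.2 = u.2 then Sum.inl (if x u.2 = 1 then u else w)
  else Sum.inr (if y u.1 = 1 then u else w)

/-- A cylindrical hitomezashi loop: a closed directed circuit which follows the
orientation, alternates between horizontal and vertical steps, and does not
repeat edges. -/
structure CylLoop (N : ℕ) (x : ZMod N → ℤ) (y : ℤ → ℤ) where
  len : ℕ
  len_pos : 0 < len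
  v : ZMod len → ℤ × ZMod N
  step : ∀ k, CHStep N x (v k) (v (k + 1)) ∨ CVStep N y (v k) (v (k + 1))
  alt : ∀ k, CHStep N x (v k) (v (k + 1)) ↔ CVStep N y (v (k + 1)) (v (k + 2))
  inj : Function.Injective (fun k => cedge N x y (v k) (v (k + 1)))

/-- `Δy` of a cylindrical loop: upward edges minus downward edges.
The homology class of the loop is `Δy / N`. -/
def CylLoop.dy {N : ℕ} {x : ZMod N → ℤ} {y : ℤ → ℤ} (L : CylLoop N x y) : ℤ :=
  haveI : NeZero L.len := ⟨L.len_pos.ne'⟩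
  ∑ k : ZMod L.len, if (L.v (k + 1)).1 = (L.v k).1 then y ((L.v k).1) else 0

/-- A directed hitomezashi path in the cylindrical pattern restricted to the
strip `a ≤ first coordinate ≤ b`. The vertex sequence is normalized to be
constant after index `len`, so that a path is determined by its data. -/
structure StripPath (N : ℕ) (x : ZMod N → ℤ) (y : ℤ → ℤ) (a b : ℤ) where
  len : ℕ
  v : ℕ → ℤ × ZMod N
  instrip : ∀ k ≤ len, a ≤ (v k).1 ∧ (v k).1 ≤ b
  step : ∀ k < len, CHStep N x (v k) (v (k + 1)) ∨ CVStep N y (v k) (v (k + 1))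
  alt : ∀ k, k + 1 < len →
    (CHStep N x (v k) (v (k + 1)) ↔ CVStep N y (v (k + 1)) (v (k + 2)))
  norm : ∀ k, len ≤ k → v k = v len

/-- A strip path is maximal if it cannot be extended at either end within the strip. -/
def StripPath.Maximal {N : ℕ} {x : ZMod N → ℤ} {y : ℤ → ℤ} {a b : ℤ}
    (p : StripPath N x y a b) : Prop :=
  (¬∃ w : ℤ × ZMod N, a ≤ w.1 ∧ w.1 ≤ b ∧
      (CHStep N x (p.v p.len) w ∨ CVStep N y (p.v p.len) w) ∧
      (p.len = 0 ∨
        (CHStep N x (p.v (p.len - 1)) (p.v p.len) ↔ CVStep N y (p.v p.len) w))) ∧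
  (¬∃ u : ℤ × ZMod N, a ≤ u.1 ∧ u.1 ≤ b ∧
      (CHStep N x u (p.v 0) ∨ CVStep N y u (p.v 0)) ∧
      (p.len = 0 ∨
        (CHStep N x u (p.v 0) ↔ CVStep N y (p.v 0) (p.v 1))))

open Finset

namespace Equiv.Perm

variable {α : Type*} (σ : Equiv.Perm α) {R : Set α}

theorem exists_iterate_notMem_of_symm_notMem (hR : R.Finite) {s : α} (hs : σ.symm s ∉ R) :
    ∃ n, σ^[n] s ∉ R := by
  by_contra! h
  have : Finite R := hR
  obtain ⟨m, n, hmn, heq⟩ :=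
    Finite.exists_ne_map_eq_of_infinite fun n : ℕ => (⟨σ^[n] s, h n⟩ : R)
  wlog hlt : n < m generalizing m n
  · exact this n m hmn.symm heq.symm (by omega)
  obtain ⟨k, hk⟩ : ∃ k, m - n = k + 1 := ⟨m - n - 1, by omega⟩
  have hper : σ^[k + 1] s = s := hk ▸ Function.iterate_cancel σ.injective (congrArg Subtype.val heq)
  rw [Function.iterate_succ_apply', ← eq_symm_apply] at hper
  exact hs (hper ▸ h k)

theorem eq_zero_of_iterate_eq_of_symm_notMem {s t : α} {m : ℕ} (hs : σ.symm s ∉ R)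
    (ht : ∀ k < m, σ^[k] t ∈ R) (h : σ^[m] t = s) : m = 0 := by
  cases m with
  | zero => rfl
  | succ k =>
    rw [Function.iterate_succ_apply', ← eq_symm_apply] at h
    exact absurd (h ▸ ht k k.lt_succ_self) hs

theorem eq_of_iterate_eq_of_symm_notMem {s t : α} {m n : ℕ} (hs : σ.symm s ∉ R)
    (ht : σ.symm t ∉ R) (hsR : ∀ k < m, σ^[k] s ∈ R) (htR : ∀ k < n, σ^[k] t ∈ R)
    (h : σ^[m] s = σ^[n] t) : s = t := by
  wlog hmn : m ≤ n generalizing s t m n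
  · exact (this ht hs htR hsR h.symm (by omega)).symm
  obtain ⟨d, rfl⟩ := Nat.exists_eq_add_of_le hmn
  rw [Function.iterate_add_apply] at h
  have h' := (σ.injective.iterate m h).symm
  rw [σ.eq_zero_of_iterate_eq_of_symm_notMem hs (fun k hk => htR k (by omega)) h',
    Function.iterate_zero_apply] at h'
  exact h'.symm

end Equiv.Perm

theorem Set.BijOn.bijOn_of_injOn {α β : Type*} {s : Set α} {t : Set β} (ht : t.Finite)
    {f g : α → β} (hf : Set.BijOn f s t) (hgm : Set.MapsTo g s t) (hg : Set.InjOn g s) :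
    Set.BijOn g s t := by
  refine ⟨hgm, hg, ?_⟩
  have : g '' s = t := Set.eq_of_subset_of_ncard_le hgm.image_subset
    (by rw [hg.ncard_image, ← hf.injOn.ncard_image, hf.image_eq]) ht
  exact this ▸ Set.surjOn_image g s

theorem Finset.card_filter_sub_card_filter_eq_sum {α ι : Type*} [Fintype ι] {s : Finset α}
    {f g : α → ι} (hf : Set.BijOn f s Set.univ) (hg : Set.BijOn g s Set.univ) {x : ι → ℤ}
    (hx : ∀ i, x i = 1 ∨ x i = -1) :
    (#{p ∈ s | x (f p) = 1 ∧ x (g p) = 1} : ℤ) - #{p ∈ s | x (f p) = -1 ∧ x (g p) = -1} =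
      ∑ i, x i := by
  have hsum : ∀ h : α → ι, Set.BijOn h s Set.univ → ∑ p ∈ s, x (h p) = ∑ i, x i :=
    fun h hh => Finset.sum_nbij h (fun _ _ => mem_univ _) hh.injOn
      (by simpa using hh.surjOn) fun _ _ => rfl
  have hpt : ∀ p, x (f p) + x (g p) =
      2 * ((if x (f p) = 1 ∧ x (g p) = 1 then 1 else 0) -
        (if x (f p) = -1 ∧ x (g p) = -1 then 1 else 0)) := by
    intro p
    rcases hx (f p) with h | h <;> rcases hx (g p) with h' | h' <;> simp [h, h']
  have := calc
    2 * ∑ i, x i = ∑ p ∈ s, (x (f p) + x (g p)) := by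
      rw [sum_add_distrib, hsum f hf, hsum g hg, two_mul]
    _ = 2 * ((#{p ∈ s | x (f p) = 1 ∧ x (g p) = 1} : ℤ) -
        #{p ∈ s | x (f p) = -1 ∧ x (g p) = -1}) := by
      simp only [hpt, ← mul_sum, sum_sub_distrib, natCast_card_filter]
  omega

theorem Set.ncard_sep_sub_ncard_sep_eq_sum {α ι : Type*} [Fintype ι] {s : Set α}
    (hs : s.Finite) {f g : α → ι} (hf : Set.BijOn f s Set.univ) (hg : Set.BijOn g s Set.univ)
    {x : ι → ℤ} (hx : ∀ i, x i = 1 ∨ x i = -1) :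
    ({p ∈ s | x (f p) = 1 ∧ x (g p) = 1}.ncard : ℤ) - {p ∈ s | x (f p) = -1 ∧ x (g p) = -1}.ncard =
      ∑ i, x i := by
  have h := card_filter_sub_card_filter_eq_sum (s := hs.toFinset) (f := f) (g := g)
    (by rwa [hs.coe_toFinset]) (by rwa [hs.coe_toFinset]) hx
  simpa only [← Set.ncard_coe_finset, coe_filter, Set.Finite.mem_toFinset] using h

section Hitomezashi

variable {N : ℕ} {x : ZMod N → ℤ} {y : ℤ → ℤ} {a b : ℤ}

def hNext (x : ZMod N → ℤ) (u : ℤ × ZMod N) : ℤ × ZMod N := (u.1 + x u.2, u.2)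

def hPrev (x : ZMod N → ℤ) (u : ℤ × ZMod N) : ℤ × ZMod N := (u.1 - x u.2, u.2)

def vNext (y : ℤ → ℤ) (u : ℤ × ZMod N) : ℤ × ZMod N := (u.1, u.2 + y u.1)

def vPrev (y : ℤ → ℤ) (u : ℤ × ZMod N) : ℤ × ZMod N := (u.1, u.2 - y u.1)

theorem chStep_iff (hx : ∀ j, x j = 1 ∨ x j = -1) {u w : ℤ × ZMod N} :
    CHStep N x u w ↔ w = hNext x u := by
  rw [CHStep, hNext, Prod.ext_iff]
  rcases hx u.2 with h | h <;> simp [h, and_comm, sub_eq_add_neg]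

theorem cvStep_iff (hy : ∀ i, y i = 1 ∨ y i = -1) {u w : ℤ × ZMod N} :
    CVStep N y u w ↔ w = vNext y u := by
  rw [CVStep, vNext, Prod.ext_iff]
  rcases hy u.1 with h | h <;> simp [h, sub_eq_add_neg]

@[simp]
theorem hPrev_hNext (u : ℤ × ZMod N) : hPrev x (hNext x u) = u := by simp [hPrev, hNext]

@[simp]
theorem hNext_hPrev (u : ℤ × ZMod N) : hNext x (hPrev x u) = u := by simp [hPrev, hNext]

theorem CHStep.fst_ne {u w : ℤ × ZMod N} (h : CHStep N x u w) : w.1 ≠ u.1 := by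
  obtain ⟨-, ⟨-, h1⟩ | ⟨-, h1⟩⟩ := h <;> omega

theorem CHStep.not_cvStep {u w : ℤ × ZMod N} (h : CHStep N x u w) : ¬CVStep N y u w :=
  fun h' => h.fst_ne h'.1

variable (x y) in
/-- The hitomezashi walk on states `(u, c)`, where `c` records whether the step leaving `u` is
horizontal. -/
def walk : Equiv.Perm ((ℤ × ZMod N) × Bool) where
  toFun s := if s.2 then (hNext x s.1, false) else (vNext y s.1, true)
  invFun s := if s.2 then (vPrev y s.1, false) else (hPrev x s.1, true)
  left_inv := by rintro ⟨u, _ | _⟩ <;> simp [hNext, hPrev, vNext, vPrev]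
  right_inv := by rintro ⟨u, _ | _⟩ <;> simp [hNext, hPrev, vNext, vPrev]

@[simp]
theorem walk_false (u : ℤ × ZMod N) : walk x y (u, false) = (vNext y u, true) := rfl

@[simp]
theorem walk_true (u : ℤ × ZMod N) : walk x y (u, true) = (hNext x u, false) := rfl

variable (a b) in
def stripStates : Set ((ℤ × ZMod N) × Bool) := {s | s.1.1 ∈ Set.Icc a b}

theorem stripStates_finite [NeZero N] : (stripStates a b : Set ((ℤ × ZMod N) × Bool)).Finite :=
  (((Set.finite_Icc a b).prod Set.finite_univ).prod Set.finite_univ).subset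
    fun _ hs => ⟨⟨hs, trivial⟩, trivial⟩

variable (x y) in
def orbitVertex (u : ℤ × ZMod N) (k : ℕ) : ℤ × ZMod N := ((walk x y)^[k] (u, false)).1

@[simp]
theorem orbitVertex_zero (u : ℤ × ZMod N) : orbitVertex x y u 0 = u := rfl

theorem walk_iterate (u : ℤ × ZMod N) (k : ℕ) :
    (walk x y)^[k] (u, false) = (orbitVertex x y u k, decide (k % 2 = 1)) := by
  induction k with
  | zero => rfl
  | succ k ih =>
    refine Prod.ext rfl ?_
    rw [Function.iterate_succ_apply', ih]
    rcases Nat.mod_two_eq_zero_or_one k with h | h <;> simp [h] <;> omega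

theorem orbitVertex_succ (u : ℤ × ZMod N) (k : ℕ) :
    orbitVertex x y u (k + 1) =
      if k % 2 = 1 then hNext x (orbitVertex x y u k) else vNext y (orbitVertex x y u k) := by
  rw [orbitVertex, Function.iterate_succ_apply', walk_iterate]
  split_ifs with h <;> simp [h]

theorem orbitVertex_chStep_iff (hx : ∀ j, x j = 1 ∨ x j = -1) (u : ℤ × ZMod N) (k : ℕ) :
    CHStep N x (orbitVertex x y u k) (orbitVertex x y u (k + 1)) ↔ k % 2 = 1 := by
  rw [orbitVertex_succ]
  split_ifs with h
  · exact iff_of_true ((chStep_iff hx).2 rfl) h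
  · exact iff_of_false (fun hc => hc.fst_ne rfl) h

theorem orbitVertex_cvStep_iff (hx : ∀ j, x j = 1 ∨ x j = -1) (hy : ∀ i, y i = 1 ∨ y i = -1)
    (u : ℤ × ZMod N) (k : ℕ) :
    CVStep N y (orbitVertex x y u k) (orbitVertex x y u (k + 1)) ↔ k % 2 = 0 := by
  rw [orbitVertex_succ]
  split_ifs with h
  · exact iff_of_false ((chStep_iff hx).2 rfl).not_cvStep (by omega)
  · exact iff_of_true ((cvStep_iff hy).2 rfl) (by omega)

variable (a b) in
def orbitPath (hx : ∀ j, x j = 1 ∨ x j = -1) (hy : ∀ i, y i = 1 ∨ y i = -1)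
    (u : ℤ × ZMod N) (n : ℕ) (hn : ∀ k ≤ n, (orbitVertex x y u k).1 ∈ Set.Icc a b) :
    StripPath N x y a b where
  len := n
  v k := orbitVertex x y u (min k n)
  instrip k hk := by
    rw [min_eq_left hk]
    exact hn k hk
  step k hk := by
    rw [min_eq_left hk.le, min_eq_left hk]
    rcases Nat.mod_two_eq_zero_or_one k with h | h
    · exact Or.inr ((orbitVertex_cvStep_iff hx hy u k).2 h)
    · exact Or.inl ((orbitVertex_chStep_iff hx u k).2 h)
  alt k hk := by
    rw [min_eq_left (by omega : k ≤ n), min_eq_left (by omega : k + 1 ≤ n),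
      min_eq_left (by omega : k + 2 ≤ n)]
    exact (orbitVertex_chStep_iff hx u k).trans
      ((orbitVertex_cvStep_iff hx hy u (k + 1)).trans (by omega)).symm
  norm k hk := by rw [min_eq_right hk, min_self]

theorem orbitPath_maximal (hx : ∀ j, x j = 1 ∨ x j = -1) (hy : ∀ i, y i = 1 ∨ y i = -1)
    {u : ℤ × ZMod N} {n : ℕ} {hn : ∀ k ≤ n, (orbitVertex x y u k).1 ∈ Set.Icc a b}
    (hentry : (hPrev x u).1 ∉ Set.Icc a b)
    (hexit : (orbitVertex x y u (n + 1)).1 ∉ Set.Icc a b) :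
    (orbitPath a b hx hy u n hn).Maximal := by
  have hodd : n % 2 = 1 := by
    by_contra h
    rw [orbitVertex_succ, if_neg h] at hexit
    exact hexit (hn n le_rfl)
  rw [orbitVertex_succ, if_pos hodd] at hexit
  obtain ⟨m, rfl⟩ : ∃ m, n = m + 1 := ⟨n - 1, by omega⟩
  simp only [StripPath.Maximal, orbitPath, min_self, Nat.add_sub_cancel, Nat.zero_min,
    min_eq_left (Nat.le_succ m), min_eq_left (Nat.le_add_left 1 m), orbitVertex_zero]
  constructor
  · rintro ⟨w, hw1, hw2, hstep, hlen | halt⟩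
    · omega
    · have hcv : ¬CVStep N y (orbitVertex x y u (m + 1)) w := by
        rw [← halt, orbitVertex_chStep_iff hx]
        omega
      rw [(chStep_iff hx).1 (hstep.resolve_right hcv)] at hw1 hw2
      exact hexit ⟨hw1, hw2⟩
  · rintro ⟨w, hw1, hw2, hstep, hlen | halt⟩
    · omega
    · have hch := halt.2 ((orbitVertex_cvStep_iff hx hy u 0).2 rfl)
      rw [(chStep_iff hx).1 hch, hPrev_hNext] at hentry
      exact hentry ⟨hw1, hw2⟩

theorem exists_maximal_v_zero_eq [NeZero N] (hx : ∀ j, x j = 1 ∨ x j = -1)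
    (hy : ∀ i, y i = 1 ∨ y i = -1) {u : ℤ × ZMod N} (hu : u.1 ∈ Set.Icc a b)
    (hentry : (hPrev x u).1 ∉ Set.Icc a b) :
    ∃ p : StripPath N x y a b, p.Maximal ∧ p.v 0 = u := by
  classical
  have hex := (walk x y).exists_iterate_notMem_of_symm_notMem stripStates_finite
    (s := (u, false)) hentry
  obtain ⟨n, hn⟩ : ∃ n, Nat.find hex = n + 1 :=
    Nat.exists_eq_succ_of_ne_zero fun h0 => Nat.find_spec hex (by rw [h0]; exact hu)
  have hin : ∀ k ≤ n, (orbitVertex x y u k).1 ∈ Set.Icc a b :=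
    fun k hk => not_not.1 (Nat.find_min hex (by omega))
  have hout : (orbitVertex x y u (n + 1)).1 ∉ Set.Icc a b := hn ▸ Nat.find_spec hex
  exact ⟨orbitPath a b hx hy u n hin, orbitPath_maximal hx hy hentry hout, rfl⟩

namespace StripPath

variable {p q : StripPath N x y a b}

theorem ext (hlen : p.len = q.len) (hv : ∀ k, p.v k = q.v k) : p = q := by
  cases p
  cases q
  cases hlen
  obtain rfl := funext hv
  rfl

theorem chStep_iff_odd (h0 : CVStep N y (p.v 0) (p.v 1)) :
    ∀ k < p.len, CHStep N x (p.v k) (p.v (k + 1)) ↔ k % 2 = 1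
  | 0, _ => iff_of_false (fun h => h.not_cvStep h0) (by omega)
  | k + 1, hk => by
    have hch : CHStep N x (p.v (k + 1)) (p.v (k + 2)) ↔ ¬CVStep N y (p.v (k + 1)) (p.v (k + 2)) :=
      ⟨CHStep.not_cvStep, (p.step (k + 1) hk).resolve_right⟩
    rw [hch, ← p.alt k hk, chStep_iff_odd h0 k (by omega)]
    omega

theorem v_eq_orbitVertex (hx : ∀ j, x j = 1 ∨ x j = -1) (hy : ∀ i, y i = 1 ∨ y i = -1)
    (h0 : CVStep N y (p.v 0) (p.v 1)) : ∀ k ≤ p.len, p.v k = orbitVertex x y (p.v 0) k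
  | 0, _ => rfl
  | k + 1, hk => by
    rw [orbitVertex_succ, ← v_eq_orbitVertex hx hy h0 k (by omega)]
    have hodd := p.chStep_iff_odd h0 k hk
    split_ifs with h
    · exact (chStep_iff hx).1 (hodd.2 h)
    · exact (cvStep_iff hy).1 ((p.step k hk).resolve_left (mt hodd.1 h))

namespace Maximal

variable (hx : ∀ j, x j = 1 ∨ x j = -1) (hy : ∀ i, y i = 1 ∨ y i = -1)
include hy

theorem len_pos (hp : p.Maximal) : 0 < p.len := by
  by_contra! h0
  exact hp.1 ⟨vNext y (p.v p.len), p.instrip _ le_rfl |>.1, p.instrip _ le_rfl |>.2,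
    Or.inr ((cvStep_iff hy).2 rfl), Or.inl (by omega)⟩

theorem cvStep_zero (hp : p.Maximal) : CVStep N y (p.v 0) (p.v 1) := by
  refine (p.step 0 (hp.len_pos hy)).resolve_left fun hch => hp.2 ?_
  refine ⟨vPrev y (p.v 0), p.instrip 0 (Nat.zero_le _) |>.1, p.instrip 0 (Nat.zero_le _) |>.2,
    Or.inr ((cvStep_iff hy).2 (by simp [vNext, vPrev])), Or.inr ?_⟩
  exact iff_of_false (fun h => h.fst_ne rfl) hch.not_cvStep

theorem len_odd (hp : p.Maximal) : p.len % 2 = 1 := by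
  by_contra heven
  obtain ⟨m, hm⟩ : ∃ m, p.len = m + 1 := ⟨p.len - 1, by have := hp.len_pos hy; omega⟩
  have hlast := (p.chStep_iff_odd (hp.cvStep_zero hy) m (by omega)).2 (by omega)
  refine hp.1 ⟨vNext y (p.v p.len), p.instrip _ le_rfl |>.1, p.instrip _ le_rfl |>.2,
    Or.inr ((cvStep_iff hy).2 rfl), Or.inr ?_⟩
  rw [hm, Nat.add_sub_cancel]
  exact iff_of_true hlast ((cvStep_iff hy).2 rfl)

include hx

theorem v_eq_orbitVertex (hp : p.Maximal) {k : ℕ} (hk : k ≤ p.len) :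
    p.v k = orbitVertex x y (p.v 0) k :=
  p.v_eq_orbitVertex hx hy (hp.cvStep_zero hy) k hk

theorem hPrev_notMem (hp : p.Maximal) : (hPrev x (p.v 0)).1 ∉ Set.Icc a b := fun hin =>
  have hch : CHStep N x (hPrev x (p.v 0)) (p.v 0) := (chStep_iff hx).2 (hNext_hPrev _).symm
  hp.2 ⟨_, hin.1, hin.2, Or.inl hch, Or.inr (iff_of_true hch (hp.cvStep_zero hy))⟩

theorem hNext_notMem (hp : p.Maximal) : (hNext x (p.v p.len)).1 ∉ Set.Icc a b := by
  intro hin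
  have hch : CHStep N x (p.v p.len) (hNext x (p.v p.len)) := (chStep_iff hx).2 rfl
  obtain ⟨m, hm⟩ : ∃ m, p.len = m + 1 := ⟨p.len - 1, by have := hp.len_pos hy; omega⟩
  have hlast := p.chStep_iff_odd (hp.cvStep_zero hy) m (by omega)
  refine hp.1 ⟨_, hin.1, hin.2, Or.inl hch, Or.inr ?_⟩
  rw [hm] at hch ⊢
  rw [Nat.add_sub_cancel]
  have := hp.len_odd hy
  exact iff_of_false (mt hlast.1 (by omega)) hch.not_cvStep

theorem orbitVertex_len_succ (hp : p.Maximal) :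
    orbitVertex x y (p.v 0) (p.len + 1) = hNext x (p.v p.len) := by
  rw [orbitVertex_succ, if_pos (hp.len_odd hy), hp.v_eq_orbitVertex hx hy le_rfl]

theorem walk_iterate_mem (hp : p.Maximal) {k : ℕ} (hk : k ≤ p.len) :
    (walk x y)^[k] (p.v 0, false) ∈ stripStates a b := by
  rw [walk_iterate, ← hp.v_eq_orbitVertex hx hy hk]
  exact p.instrip k hk

theorem eq_of_v_zero_eq (hp : p.Maximal) (hq : q.Maximal) (h : p.v 0 = q.v 0) : p = q := by
  have hle : ∀ {p q : StripPath N x y a b}, p.Maximal → q.Maximal → p.v 0 = q.v 0 →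
      p.len ≤ q.len := by
    intro p q hp hq h
    by_contra! hlt
    have hin := p.instrip (q.len + 1) hlt
    rw [hp.v_eq_orbitVertex hx hy hlt, h, hq.orbitVertex_len_succ hx hy] at hin
    exact hq.hNext_notMem hx hy hin
  have hlen := (hle hp hq h).antisymm (hle hq hp h.symm)
  refine StripPath.ext hlen fun k => ?_
  rcases le_total k p.len with hk | hk
  · rw [hp.v_eq_orbitVertex hx hy hk, hq.v_eq_orbitVertex hx hy (hlen ▸ hk), h]
  · rw [p.norm k hk, q.norm k (hlen ▸ hk), hp.v_eq_orbitVertex hx hy le_rfl,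
      hq.v_eq_orbitVertex hx hy le_rfl, h, hlen]

theorem eq_of_v_len_eq (hp : p.Maximal) (hq : q.Maximal) (h : p.v p.len = q.v q.len) :
    p = q := by
  refine hp.eq_of_v_zero_eq hx hy hq (congrArg Prod.fst <|
    (walk x y).eq_of_iterate_eq_of_symm_notMem (hp.hPrev_notMem hx hy) (hq.hPrev_notMem hx hy)
      (fun k hk => hp.walk_iterate_mem hx hy hk.le) (fun k hk => hq.walk_iterate_mem hx hy hk.le)
      ?_)
  rw [walk_iterate, walk_iterate, ← hp.v_eq_orbitVertex hx hy le_rfl,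
    ← hq.v_eq_orbitVertex hx hy le_rfl, h, hp.len_odd hy, hq.len_odd hy]

theorem fst_v_zero (hp : p.Maximal) : (p.v 0).1 = if x (p.v 0).2 = 1 then a else b := by
  have hin := p.instrip 0 (Nat.zero_le _)
  have hout := hp.hPrev_notMem hx hy
  simp only [hPrev, Set.mem_Icc] at hout
  rcases hx (p.v 0).2 with h | h <;> simp only [h] at hout ⊢ <;> norm_num <;> omega

theorem fst_v_len (hp : p.Maximal) : (p.v p.len).1 = if x (p.v p.len).2 = 1 then b else a := by
  have hin := p.instrip p.len le_rfl
  have hout := hp.hNext_notMem hx hy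
  simp only [hNext, Set.mem_Icc] at hout
  rcases hx (p.v p.len).2 with h | h <;> simp only [h] at hout ⊢ <;> norm_num <;> omega

theorem eq_of_v_zero_snd_eq (hp : p.Maximal) (hq : q.Maximal) (h : (p.v 0).2 = (q.v 0).2) :
    p = q :=
  hp.eq_of_v_zero_eq hx hy hq <|
    Prod.ext (by rw [hp.fst_v_zero hx hy, hq.fst_v_zero hx hy, h]) h

theorem eq_of_v_len_snd_eq (hp : p.Maximal) (hq : q.Maximal)
    (h : (p.v p.len).2 = (q.v q.len).2) : p = q :=
  hp.eq_of_v_len_eq hx hy hq <|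
    Prod.ext (by rw [hp.fst_v_len hx hy, hq.fst_v_len hx hy, h]) h

variable (hab : a < b)
include hab

theorem fst_v_zero_eq_left_iff (hp : p.Maximal) : (p.v 0).1 = a ↔ x (p.v 0).2 = 1 := by
  rcases hx (p.v 0).2 with h | h <;> simp [hp.fst_v_zero hx hy, h, hab.ne']

theorem fst_v_zero_eq_right_iff (hp : p.Maximal) : (p.v 0).1 = b ↔ x (p.v 0).2 = -1 := by
  rcases hx (p.v 0).2 with h | h <;> simp [hp.fst_v_zero hx hy, h, hab.ne]

theorem fst_v_len_eq_right_iff (hp : p.Maximal) : (p.v p.len).1 = b ↔ x (p.v p.len).2 = 1 := by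
  rcases hx (p.v p.len).2 with h | h <;> simp [hp.fst_v_len hx hy, h, hab.ne]

theorem fst_v_len_eq_left_iff (hp : p.Maximal) : (p.v p.len).1 = a ↔ x (p.v p.len).2 = -1 := by
  rcases hx (p.v p.len).2 with h | h <;> simp [hp.fst_v_len hx hy, h, hab.ne']

end Maximal

end StripPath

theorem exists_maximal_v_zero_snd_eq [NeZero N] (hx : ∀ j, x j = 1 ∨ x j = -1)
    (hy : ∀ i, y i = 1 ∨ y i = -1) (hab : a ≤ b) (j : ZMod N) :
    ∃ p : StripPath N x y a b, p.Maximal ∧ (p.v 0).2 = j := by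
  obtain ⟨p, hp, h0⟩ :=
    exists_maximal_v_zero_eq hx hy (a := a) (b := b) (u := (if x j = 1 then a else b, j))
      (by split_ifs <;> simp [hab])
      (by rcases hx j with h | h <;> simp [hPrev, h])
  exact ⟨p, hp, by rw [h0]⟩

end Hitomezashi

theorem stmt_14 (N : ℕ) [NeZero N] (x : ZMod N → ℤ) (y : ℤ → ℤ)
    (hx : ∀ j, x j = 1 ∨ x j = -1)
    (hy : ∀ i, y i = 1 ∨ y i = -1)
    (a b : ℤ) (hab : a < b) :
    {p : StripPath N x y a b |
        p.Maximal ∧ (p.v 0).1 = a ∧ (p.v p.len).1 = b}.Finite ∧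
    {p : StripPath N x y a b |
        p.Maximal ∧ (p.v 0).1 = b ∧ (p.v p.len).1 = a}.Finite ∧
    (({p : StripPath N x y a b |
          p.Maximal ∧ (p.v 0).1 = a ∧ (p.v p.len).1 = b}.ncard : ℤ)
        - ({p : StripPath N x y a b |
          p.Maximal ∧ (p.v 0).1 = b ∧ (p.v p.len).1 = a}.ncard : ℤ)
      = ∑ j, x j) ∧
    ((∑ j, x j) ≠ 0 → ∃ p : StripPath N x y a b, p.Maximal ∧
      (((p.v 0).1 = a ∧ (p.v p.len).1 = b) ∨ ((p.v 0).1 = b ∧ (p.v p.len).1 = a))) := by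
  set M := {p : StripPath N x y a b | p.Maximal}
  set A := {p : StripPath N x y a b | p.Maximal ∧ (p.v 0).1 = a ∧ (p.v p.len).1 = b}
  set B := {p : StripPath N x y a b | p.Maximal ∧ (p.v 0).1 = b ∧ (p.v p.len).1 = a}
  have hstart : Set.BijOn (fun p : StripPath N x y a b => (p.v 0).2) M Set.univ :=
    ⟨Set.mapsTo_univ _ _, fun p hp q hq => hp.eq_of_v_zero_snd_eq hx hy hq,
      fun j _ => exists_maximal_v_zero_snd_eq hx hy hab.le j⟩
  have hM : M.Finite := .of_finite_image (hstart.image_eq ▸ Set.finite_univ) hstart.injOn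
  have hend : Set.BijOn (fun p : StripPath N x y a b => (p.v p.len).2) M Set.univ :=
    hstart.bijOn_of_injOn Set.finite_univ (Set.mapsTo_univ _ _)
      fun p hp q hq => hp.eq_of_v_len_snd_eq hx hy hq
  have hA : A = {p ∈ M | x (p.v 0).2 = 1 ∧ x (p.v p.len).2 = 1} := Set.ext fun p =>
    and_congr_right fun hp => and_congr (hp.fst_v_zero_eq_left_iff hx hy hab)
      (hp.fst_v_len_eq_right_iff hx hy hab)
  have hB : B = {p ∈ M | x (p.v 0).2 = -1 ∧ x (p.v p.len).2 = -1} := Set.ext fun p =>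
    and_congr_right fun hp => and_congr (hp.fst_v_zero_eq_right_iff hx hy hab)
      (hp.fst_v_len_eq_left_iff hx hy hab)
  have hcount : (A.ncard : ℤ) - B.ncard = ∑ j, x j :=
    hA ▸ hB ▸ Set.ncard_sep_sub_ncard_sep_eq_sum hM hstart hend hx
  refine ⟨hM.subset fun p hp => hp.1, hM.subset fun p hp => hp.1, hcount, fun hne => ?_⟩
  by_cases hA0 : A.ncard = 0
  · obtain ⟨p, hp, hpB⟩ := Set.nonempty_of_ncard_ne_zero (s := B) (by omega)
    exact ⟨p, hp, .inr hpB⟩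
  · obtain ⟨p, hp, hpA⟩ := Set.nonempty_of_ncard_ne_zero hA0
    exact ⟨p, hp, .inl hpA⟩
end

section
/- Let x : ℤ/Nℤ → {-1,1} with Σ(x) ≠ 0 and y : ℤ → {-1,1}. Then the cylindrical hitomezashi pattern Cloth_{ℤ×(ℤ/Nℤ)}(x,y) contains no hitomezashi loop of nonzero homology class. -/
/- ----------------  auxiliary material  ---------------- -/

private lemma zmod_sum_eq_range (N : ℕ) [NeZero N] (x : ZMod N → ℤ) :
    ∑ j : ZMod N, x j = ∑ t ∈ Finset.range N, x (t : ZMod N) := by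
  refine Finset.sum_nbij' (fun j => j.val) (fun t => (t : ZMod N)) ?_ ?_ ?_ ?_ ?_
  · intro a _; exact Finset.mem_range.mpr (ZMod.val_lt a)
  · intro a _; exact Finset.mem_univ _
  · intro a _; exact ZMod.natCast_rightInverse a
  · intro a ha; exact ZMod.val_cast_of_lt (Finset.mem_range.mp ha)
  · intro a _; rw [ZMod.natCast_rightInverse a]

private lemma zmod_telescope {n : ℕ} [NeZero n] (F : ZMod n → ℤ) :
    ∑ k : ZMod n, (F (k + 1) - F k) = 0 := by
  rw [Finset.sum_sub_distrib,
    Fintype.sum_equiv (Equiv.addRight (1 : ZMod n)) (fun k => F (k + 1)) F (fun _ => rfl)]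
  exact sub_self _

private lemma zmod_shift {n : ℕ} [NeZero n] (g : ZMod n → ℤ) (c : ZMod n) :
    ∑ k : ZMod n, g (k + c) = ∑ k : ZMod n, g k :=
  Fintype.sum_equiv (Equiv.addRight c) _ _ (fun _ => rfl)

private def psiF (N : ℕ) [NeZero N] (x : ZMod N → ℤ) (j : ZMod N) : ℤ :=
  N * (∑ t ∈ Finset.range j.val, x (t : ZMod N)) - (j.val : ℤ) * ∑ a, x a

private lemma psiF_step (N : ℕ) [NeZero N] (x : ZMod N → ℤ) (j : ZMod N) :
    psiF N x (j + 1) - psiF N x j = N * x j - ∑ a, x a := by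
  have hvlt : j.val < N := ZMod.val_lt j
  have hxj : ((j.val : ZMod N)) = j := ZMod.natCast_rightInverse j
  have hS : ∑ a, x a = ∑ t ∈ Finset.range N, x (t : ZMod N) := zmod_sum_eq_range N x
  by_cases h : j.val + 1 = N
  · have hj1 : (j + 1 : ZMod N) = 0 := by
      have h0 : ((j.val + 1 : ℕ) : ZMod N) = 0 := by rw [h]; exact ZMod.natCast_self N
      rw [Nat.cast_add, Nat.cast_one, hxj] at h0
      exact h0
    have hsucc : ∑ t ∈ Finset.range (j.val + 1), x (t : ZMod N)
        = (∑ t ∈ Finset.range j.val, x (t : ZMod N)) + x j := by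
      rw [Finset.sum_range_succ, hxj]
    rw [hj1]
    simp only [psiF, ZMod.val_zero, Finset.range_zero, Finset.sum_empty]
    rw [hS, show Finset.range N = Finset.range (j.val + 1) from by rw [h], hsucc,
      show ((N : ℕ) : ℤ) = (j.val : ℤ) + 1 from by exact_mod_cast h.symm]
    push_cast
    ring
  · have hval : (j + 1 : ZMod N).val = j.val + 1 := by
      have h1 : (1 : ZMod N).val = 1 := by
        have : ((1 : ℕ) : ZMod N) = (1 : ZMod N) := by push_cast; rfl
        rw [← this]; exact ZMod.val_cast_of_lt (by omega)
      rw [ZMod.val_add_of_lt (by omega)]; rw [h1]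
    simp only [psiF, hval]
    rw [Finset.sum_range_succ, hxj]
    push_cast
    ring

private def WF (y : ℤ → ℤ) (n : ℤ) : ℤ :=
  (∑ t ∈ Finset.range n.toNat, (y t + y (t + 1))) -
    ∑ t ∈ Finset.range (-n).toNat, (y (-(t : ℤ) - 1) + y (-(t : ℤ)))

private lemma WF_step (y : ℤ → ℤ) (n : ℤ) : WF y (n + 1) - WF y n = y n + y (n + 1) := by
  rcases le_or_gt 0 n with hn | hn
  · have h1 : (n + 1).toNat = n.toNat + 1 := by omega
    have h2 : (-n).toNat = 0 := by omega
    have h3 : (-(n + 1)).toNat = 0 := by omega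
    have h4 : (n.toNat : ℤ) = n := Int.toNat_of_nonneg hn
    simp only [WF, h1, h2, h3, Finset.range_zero, Finset.sum_empty, Finset.sum_range_succ, h4]
    ring
  · obtain ⟨m, hm⟩ : ∃ m : ℕ, (-n).toNat = m + 1 := ⟨(-n).toNat - 1, by omega⟩
    have h0 : (n + 1).toNat = 0 := by omega
    have h2 : n.toNat = 0 := by omega
    have h3 : (-(n + 1)).toNat = m := by omega
    have h4 : -(m : ℤ) = n + 1 := by omega
    simp only [WF, h0, h2, hm, h3, Finset.range_zero, Finset.sum_empty, Finset.sum_range_succ]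
    rw [h4, show n + 1 - 1 = n from by ring]
    ring

private lemma CH_fst_ne {N : ℕ} {x : ZMod N → ℤ} {u w : ℤ × ZMod N}
    (h : CHStep N x u w) : w.1 ≠ u.1 := by
  rcases h.2 with ⟨-, h2⟩ | ⟨-, h2⟩ <;> omega

private lemma loop_CV {N : ℕ} {x : ZMod N → ℤ} {y : ℤ → ℤ} (L : CylLoop N x y)
    (k : ZMod L.len) (hk : (L.v (k + 1)).1 = (L.v k).1) :
    CVStep N y (L.v k) (L.v (k + 1)) := by
  rcases L.step k with h | h
  · exact absurd hk (CH_fst_ne h)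
  · exact h

private lemma loop_CH {N : ℕ} {x : ZMod N → ℤ} {y : ℤ → ℤ} (L : CylLoop N x y)
    (k : ZMod L.len) (hk : ¬ (L.v (k + 1)).1 = (L.v k).1) :
    CHStep N x (L.v k) (L.v (k + 1)) := by
  rcases L.step k with h | h
  · exact h
  · exact absurd h.1 hk

private def tF {N : ℕ} {x : ZMod N → ℤ} {y : ℤ → ℤ} (L : CylLoop N x y)
    (k : ZMod L.len) : ℤ :=
  if (L.v (k + 1)).1 = (L.v k).1 then y ((L.v k).1) else 0

private def bpF {N : ℕ} {x : ZMod N → ℤ} {y : ℤ → ℤ} (L : CylLoop N x y)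
    (k : ZMod L.len) : ℤ :=
  if (L.v (k + 1)).1 = (L.v k).1 ∧ y ((L.v k).1) = 1 then x ((L.v k).2) else 0

private def bmF {N : ℕ} {x : ZMod N → ℤ} {y : ℤ → ℤ} (L : CylLoop N x y)
    (k : ZMod L.len) : ℤ :=
  if (L.v (k + 1)).1 = (L.v k).1 ∧ y ((L.v k).1) = -1 then -(x ((L.v k).2 - 1)) else 0

private lemma key1 {N : ℕ} [NeZero N] {x : ZMod N → ℤ} {y : ℤ → ℤ}
    (L : CylLoop N x y) (k : ZMod L.len) :
    psiF N x ((L.v (k + 1)).2) - psiF N x ((L.v k).2)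
      = N * (bpF L k + bmF L k) - (∑ a, x a) * tF L k := by
  unfold tF bpF bmF
  by_cases hk : (L.v (k + 1)).1 = (L.v k).1
  · obtain ⟨-, h2⟩ := loop_CV L k hk
    rcases h2 with ⟨hy1, hw⟩ | ⟨hy1, hw⟩
    · rw [hw, psiF_step]
      simp only [hk, hy1]
      norm_num
    · have hps := psiF_step N (x := x) ((L.v k).2 - 1)
      rw [sub_add_cancel] at hps
      rw [hw]
      simp only [hk, hy1]
      norm_num
      linarith
  · have h := loop_CH L k hk
    rw [h.1, if_neg hk, if_neg (fun hc => hk hc.1), if_neg (fun hc => hk hc.1)]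
    ring

private lemma key2 {N : ℕ} [NeZero N] {x : ZMod N → ℤ} {y : ℤ → ℤ}
    (hy : ∀ i, y i = 1 ∨ y i = -1)
    (L : CylLoop N x y) (k : ZMod L.len) :
    2 * bpF L (k + 1) + 2 * bmF L (k - 1)
      = WF y ((L.v (k + 1)).1) - WF y ((L.v k).1) := by
  have e1 : k - 1 + 1 = k := by ring
  have e2 : k - 1 + 2 = k + 1 := by ring
  have e3 : k + 1 + 1 = k + 2 := by ring
  have halt1 := L.alt (k - 1)
  rw [e1, e2] at halt1
  unfold bpF bmF
  rw [e1, e3]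
  by_cases hk : (L.v (k + 1)).1 = (L.v k).1
  · have hcv := loop_CV L k hk
    have hH1 : ¬ (L.v (k + 2)).1 = (L.v (k + 1)).1 := by
      intro hc
      have hcv1 := loop_CV L (k + 1) (show (L.v (k + 1 + 1)).1 = (L.v (k + 1)).1 from by rw [e3]; exact hc)
      rw [e3] at hcv1
      exact CH_fst_ne ((L.alt k).mpr hcv1) hk
    have hH2 : ¬ (L.v k).1 = (L.v (k - 1)).1 := CH_fst_ne (halt1.mpr hcv)
    rw [if_neg (fun hc => hH1 hc.1), if_neg (fun hc => hH2 hc.1), hk]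
    ring
  · have h := loop_CH L k hk
    have hcv1 : CVStep N y (L.v (k + 1)) (L.v (k + 2)) := (L.alt k).mp h
    have hcvm : CVStep N y (L.v (k - 1)) (L.v k) := by
      rcases L.step (k - 1) with hch | hcv
      · rw [e1] at hch
        exact absurd (halt1.mp hch).1 hk
      · rw [e1] at hcv
        exact hcv
    have hc1 : (L.v (k + 2)).1 = (L.v (k + 1)).1 := hcv1.1
    have hcm : (L.v k).1 = (L.v (k - 1)).1 := hcvm.1
    obtain ⟨-, hcv2⟩ := hcvm
    rcases h.2 with ⟨hx1, hi⟩ | ⟨hx1, hi⟩ <;>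
      rcases hy ((L.v (k + 1)).1) with hy1 | hy1 <;>
        rcases hy ((L.v k).1) with hy0 | hy0
    · -- x = 1, y₁ = 1, y₀ = 1
      have hW := WF_step y ((L.v k).1)
      rw [hi] at hc1 hy1 ⊢
      simp only [hc1, hy1, hy0, h.1, hx1, ← hcm]
      norm_num
      linarith [hW, hy0, hy1]
    · -- x = 1, y₁ = 1, y₀ = -1
      have hW := WF_step y ((L.v k).1)
      rw [hi] at hc1 hy1 ⊢
      rcases hcv2 with ⟨hcon, -⟩ | ⟨-, hb⟩
      · rw [← hcm, hy0] at hcon; norm_num at hcon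
      · have hbmv : (L.v (k - 1)).2 - 1 = (L.v k).2 := by rw [hb]
        simp only [hc1, hy1, hy0, h.1, hbmv, hx1, ← hcm]
        norm_num
        linarith [hW, hy0, hy1]
    · -- x = 1, y₁ = -1, y₀ = 1
      have hW := WF_step y ((L.v k).1)
      rw [hi] at hc1 hy1 ⊢
      simp only [hc1, hy1, hy0, h.1, hx1, ← hcm]
      norm_num
      linarith [hW, hy0, hy1]
    · -- x = 1, y₁ = -1, y₀ = -1
      have hW := WF_step y ((L.v k).1)
      rw [hi] at hc1 hy1 ⊢
      rcases hcv2 with ⟨hcon, -⟩ | ⟨-, hb⟩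
      · rw [← hcm, hy0] at hcon; norm_num at hcon
      · have hbmv : (L.v (k - 1)).2 - 1 = (L.v k).2 := by rw [hb]
        simp only [hc1, hy1, hy0, h.1, hbmv, hx1, ← hcm]
        norm_num
        linarith [hW, hy0, hy1]
    · -- x = -1, y₁ = 1, y₀ = 1
      have hW := WF_step y ((L.v k).1 - 1)
      rw [sub_add_cancel] at hW
      rw [hi] at hc1 hy1 ⊢
      simp only [hc1, hy1, hy0, h.1, hx1, ← hcm]
      norm_num
      linarith [hW, hy0, hy1]
    · -- x = -1, y₁ = 1, y₀ = -1
      have hW := WF_step y ((L.v k).1 - 1)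
      rw [sub_add_cancel] at hW
      rw [hi] at hc1 hy1 ⊢
      rcases hcv2 with ⟨hcon, -⟩ | ⟨-, hb⟩
      · rw [← hcm, hy0] at hcon; norm_num at hcon
      · have hbmv : (L.v (k - 1)).2 - 1 = (L.v k).2 := by rw [hb]
        simp only [hc1, hy1, hy0, h.1, hbmv, hx1, ← hcm]
        norm_num
        linarith [hW, hy0, hy1]
    · -- x = -1, y₁ = -1, y₀ = 1
      have hW := WF_step y ((L.v k).1 - 1)
      rw [sub_add_cancel] at hW
      rw [hi] at hc1 hy1 ⊢
      simp only [hc1, hy1, hy0, h.1, hx1, ← hcm]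
      norm_num
      linarith [hW, hy0, hy1]
    · -- x = -1, y₁ = -1, y₀ = -1
      have hW := WF_step y ((L.v k).1 - 1)
      rw [sub_add_cancel] at hW
      rw [hi] at hc1 hy1 ⊢
      rcases hcv2 with ⟨hcon, -⟩ | ⟨-, hb⟩
      · rw [← hcm, hy0] at hcon; norm_num at hcon
      · have hbmv : (L.v (k - 1)).2 - 1 = (L.v k).2 := by rw [hb]
        simp only [hc1, hy1, hy0, h.1, hbmv, hx1, ← hcm]
        norm_num
        linarith [hW, hy0, hy1]

theorem stmt_15 (N : ℕ) [NeZero N] (x : ZMod N → ℤ) (y : ℤ → ℤ)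
    (hx : ∀ j, x j = 1 ∨ x j = -1)
    (hy : ∀ i, y i = 1 ∨ y i = -1)
    (hsum : ∑ j, x j ≠ 0) :
    ∀ L : CylLoop N x y, L.dy = 0 := by
  intro L
  haveI : NeZero L.len := ⟨L.len_pos.ne'⟩
  have hdy : L.dy = ∑ k : ZMod L.len, tF L k := rfl
  have H1 : (0 : ℤ)
      = N * ((∑ k : ZMod L.len, bpF L k) + ∑ k : ZMod L.len, bmF L k)
        - (∑ a, x a) * L.dy := by
    calc (0 : ℤ)
        = ∑ k : ZMod L.len, (psiF N x ((L.v (k + 1)).2) - psiF N x ((L.v k).2)) :=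
          (zmod_telescope (fun k : ZMod L.len => psiF N x ((L.v k).2))).symm
      _ = ∑ k : ZMod L.len, ((N : ℤ) * (bpF L k + bmF L k) - (∑ a, x a) * tF L k) :=
          Finset.sum_congr rfl (fun k _ => key1 L k)
      _ = N * ((∑ k : ZMod L.len, bpF L k) + ∑ k : ZMod L.len, bmF L k)
            - (∑ a, x a) * L.dy := by
          rw [Finset.sum_sub_distrib, ← Finset.mul_sum, ← Finset.mul_sum,
            Finset.sum_add_distrib, hdy]
  have H2 : (∑ k : ZMod L.len, bpF L k) + ∑ k : ZMod L.len, bmF L k = 0 := by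
    have h1 : ∑ k : ZMod L.len, (2 * bpF L (k + 1) + 2 * bmF L (k - 1)) = 0 := by
      calc ∑ k : ZMod L.len, (2 * bpF L (k + 1) + 2 * bmF L (k - 1))
          = ∑ k : ZMod L.len, (WF y ((L.v (k + 1)).1) - WF y ((L.v k).1)) :=
            Finset.sum_congr rfl (fun k _ => key2 hy L k)
        _ = 0 := zmod_telescope (fun k : ZMod L.len => WF y ((L.v k).1))
    have h2 : ∑ k : ZMod L.len, bpF L (k + 1) = ∑ k : ZMod L.len, bpF L k :=
      zmod_shift (bpF L) 1
    have h3 : ∑ k : ZMod L.len, bmF L (k - 1) = ∑ k : ZMod L.len, bmF L k := by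
      simpa [sub_eq_add_neg] using zmod_shift (bmF L) (-1)
    rw [Finset.sum_add_distrib, ← Finset.mul_sum, ← Finset.mul_sum, h2, h3] at h1
    linarith
  rw [H2, mul_zero, zero_sub] at H1
  have hz : (∑ a, x a) * L.dy = 0 := by linarith
  rcases mul_eq_zero.mp hz with h | h
  · exact absurd h hsum
  · exact h
end
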